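/- Let (K, ≼) be a weak AEC that is strongly κ⁺-categorical for some cardinal κ ≥ LS(K, ≼) + ℵ₀. Then for every D ∈ K of cardinality κ and every limit ordinal γ < κ⁺ there is a continuous ≼-chain (A_i)_{i<κ⁺} of members of K whose union is isomorphic to F(κ⁺), such that A₀ ≅ D and for all α < β < κ⁺ with β a successor ordinal, A_β is a (κ, γ)-(K, ≼)-limit model over A_α. (Proposition 3.12: filtration of F(κ⁺) by limit models.) -/

import Mathlib

/-!
Build a continuous chain `(c i)_{i < κ⁺}` with `c 0 = D` in which every `c (i + 1)` has
cardinality `κ`, is universal over `c i` and properly extends it (strong categoricity provides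
this: a proper extension of `c i` embeds over `c i` into a universal one). The filtration is
`A i = c (γ * i)`. As `A (δ + 1) = c (γ * δ + γ)`, the chain `c (γ * α), c (γ * δ + 1),
c (γ * δ + 2), …` of length `γ` shows that it is a `(κ, γ)`-limit model over `A α`; universality
at its first step survives the strong extension `c (γ * α + 1) ≼ c (γ * δ + 1)`. The `A i` grow
strictly, so their union has cardinality `κ⁺` and is isomorphic to `F` by categoricity.
-/

open FirstOrder Cardinal Set

universe u

/-- A structure for the language `L` whose carrier is a subset of the ambient type `U`. -/
structure SStr (L : FirstOrder.Language.{u, u}) (U : Type u) where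
  carrier : Set U
  str : L.Structure carrier

attribute [instance] SStr.str

namespace SStr

variable {L : FirstOrder.Language.{u, u}} {U : Type u}

/-- `A` is an `L`-substructure of `B`: the carrier of `A` is included in that of `B` and the
inclusion map is an `L`-embedding. -/
def Sub (A B : SStr L U) : Prop :=
  A.carrier ⊆ B.carrier ∧
    ∃ f : A.carrier ↪[L] B.carrier, ∀ x : A.carrier, (f x : U) = (x : U)

/-- An isomorphism `f : A ≃ B` restricts to an isomorphism of `C` (a substructure of `A`)
onto `D` (a substructure of `B`). -/
def RestrictsTo {A B : SStr L U} (f : A.carrier ≃[L] B.carrier) (C D : SStr L U) : Prop :=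
  ∃ g : C.carrier ≃[L] D.carrier,
    ∀ (x : C.carrier) (hx : (x : U) ∈ A.carrier), (g x : U) = (f ⟨x, hx⟩ : U)

end SStr

/-- `B` is the union of the chain `(A i)_{i < δ}`, as a structure: its carrier is the union of
the carriers and each `A i` is a substructure of `B`. -/
def IsUnionOf {L : FirstOrder.Language.{u, u}} {U : Type u} (δ : Ordinal.{u})
    (A : Ordinal.{u} → SStr L U) (B : SStr L U) : Prop :=
  B.carrier = ⋃ j ∈ Set.Iio δ, (A j).carrier ∧ ∀ i, i < δ → (A i).Sub B

/-- An abstract class of `L`-structures (with carriers inside the ambient type `U`):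
a class `K` together with a strong-substructure relation, closed under isomorphism,
with the strong relation a partial order refining the substructure relation. -/
structure AbstractClass (L : FirstOrder.Language.{u, u}) (U : Type u) where
  K : Set (SStr L U)
  strong : SStr L U → SStr L U → Prop
  mem_of_strong_left : ∀ {A B}, strong A B → A ∈ K
  mem_of_strong_right : ∀ {A B}, strong A B → B ∈ K
  iso_mem : ∀ {A B : SStr L U}, A ∈ K → Nonempty (A.carrier ≃[L] B.carrier) → B ∈ K
  iso_strong : ∀ {A B C D : SStr L U}, A ∈ K → strong C A →
    ∀ f : A.carrier ≃[L] B.carrier, SStr.RestrictsTo f C D → D.Sub B → strong D B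
  sub_of_strong : ∀ {A B}, strong A B → A.Sub B
  strong_refl : ∀ {A}, A ∈ K → strong A A
  strong_antisymm : ∀ {A B}, strong A B → strong B A → A = B
  strong_trans : ∀ {A B C}, strong A B → strong B C → strong A C

namespace AbstractClass

variable {L : FirstOrder.Language.{u, u}} {U : Type u}

/-- `(A i)_{i < δ}` is an increasing continuous strong chain of members of `K`. -/
def IsCtsChain (AC : AbstractClass L U) (δ : Ordinal.{u}) (A : Ordinal.{u} → SStr L U) : Prop :=
  (∀ i, i < δ → A i ∈ AC.K) ∧
  (∀ i j, i < j → j < δ → AC.strong (A i) (A j)) ∧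
  (∀ i, i < δ → Order.IsSuccLimit i → (A i).carrier = ⋃ j ∈ Set.Iio i, (A j).carrier)

/-- An `L`-embedding `f : C → B` is strong if its image, as a substructure of `B`,
is a strong substructure of `B`. -/
def IsStrongEmb (AC : AbstractClass L U) {C B : SStr L U} (f : C.carrier ↪[L] B.carrier) : Prop :=
  ∃ D : SStr L U, AC.strong D B ∧
    ∃ g : C.carrier ≃[L] D.carrier, ∀ x : C.carrier, (g x : U) = (f x : U)

/-- `B` is `(K, ≼)`-universal over `A`. -/
def UnivOver (AC : AbstractClass L U) (B A : SStr L U) : Prop :=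
  ∀ C ∈ AC.K, AC.strong A C → #C.carrier = #A.carrier →
    ∃ f : C.carrier ↪[L] B.carrier,
      AC.IsStrongEmb f ∧ ∀ x : C.carrier, (x : U) ∈ A.carrier → (f x : U) = (x : U)

/-- `M` is a `(K, ≼)`-universal model. -/
def IsUniversal (AC : AbstractClass L U) (M : SStr L U) : Prop :=
  ∀ C ∈ AC.K, #C.carrier ≤ #M.carrier →
    ∃ f : C.carrier ↪[L] M.carrier, AC.IsStrongEmb f

/-- `B` is a `(κ, δ)-(K, ≼)`-limit model over `A`. -/
def IsLimitModelOver (AC : AbstractClass L U) (κ : Cardinal.{u}) (δ : Ordinal.{u})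
    (B A : SStr L U) : Prop :=
  ∃ c : Ordinal.{u} → SStr L U,
    c 0 = A ∧
    AC.IsCtsChain δ c ∧
    IsUnionOf δ c B ∧
    (∀ i, i < δ → AC.UnivOver (c (i + 1)) (c i)) ∧
    (∀ i, i < δ → #(c i).carrier = κ)

/-- `(K, ≼)` is strongly `κ⁺`-categorical. -/
def StronglyCat (AC : AbstractClass L U) (κ : Cardinal.{u}) : Prop :=
  (∃ F ∈ AC.K, #F.carrier = Order.succ κ ∧
      ∀ A ∈ AC.K, #A.carrier = Order.succ κ → Nonempty (A.carrier ≃[L] F.carrier)) ∧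
  (∀ A ∈ AC.K, #A.carrier = κ → ∃ B ∈ AC.K, #B.carrier = κ ∧ A ≠ B ∧ AC.strong A B) ∧
  (∀ A ∈ AC.K, #A.carrier = κ → ∃ B ∈ AC.K, #B.carrier = κ ∧ AC.UnivOver B A)

end AbstractClass

/-- A weak AEC: an abstract class closed under unions of continuous strong chains, with a
Löwenheim–Skolem number. Neither Smoothness nor Coherence is assumed. -/
structure WeakAEC (L : FirstOrder.Language.{u, u}) (U : Type u) extends AbstractClass L U where
  LS : Cardinal.{u}
  LS_ge : L.card + ℵ₀ ≤ LS
  chain_union : ∀ δ : Ordinal.{u}, Order.IsSuccLimit δ → ∀ A : Ordinal.{u} → SStr L U,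
    toAbstractClass.IsCtsChain δ A →
    ∃ B, IsUnionOf δ A B ∧ B ∈ K ∧ ∀ i, i < δ → strong (A i) B
  ls : ∀ A ∈ K, ∀ s : Set U, s ⊆ A.carrier →
    ∃ C ∈ K, s ⊆ C.carrier ∧ strong C A ∧ #C.carrier ≤ #s + LS

open FirstOrder.Language in
theorem FirstOrder.Language.Structure.eq_of_embedding_eq_id {L : FirstOrder.Language} {M : Type*}
    {s t : L.Structure M} (f : @Embedding L M M s t) (hf : ∀ x, f x = x) : s = t := by
  obtain ⟨F, R⟩ := s
  obtain ⟨F', R'⟩ := t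
  congr
  · funext n φ v
    simpa [Function.comp_def, hf] using @Embedding.map_fun L M M ⟨F, R⟩ ⟨F', R'⟩ f n φ v
  · funext n r v
    simpa [Function.comp_def, hf] using (@Embedding.map_rel L M M ⟨F, R⟩ ⟨F', R'⟩ f n r v).symm

namespace SStr

variable {L : FirstOrder.Language.{u, u}} {U : Type u}

theorem eq_of_sub_of_carrier_eq {A B : SStr L U} (h : A.Sub B) (hc : A.carrier = B.carrier) :
    A = B := by
  obtain ⟨cA, sA⟩ := A
  obtain ⟨cB, sB⟩ := B
  obtain rfl : cA = cB := hc
  obtain ⟨-, f, hf⟩ := h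
  obtain rfl : sA = sB := Language.Structure.eq_of_embedding_eq_id f fun x => Subtype.ext (hf x)
  rfl

end SStr

namespace AbstractClass

open Ordinal Order

variable {L : FirstOrder.Language.{u, u}} {U : Type u} {AC : AbstractClass L U}

theorem UnivOver.strong {B X : SStr L U} (hu : AC.UnivOver B X) (hX : X ∈ AC.K) :
    AC.strong X B := by
  obtain ⟨f, ⟨D, hDB, g, hg⟩, hfix⟩ := hu X hX (AC.strong_refl hX) rfl
  have hgx : ∀ x : X.carrier, (g x : U) = x := fun x => (hg x).trans (hfix x x.2)
  have hXD : X.carrier ⊆ D.carrier := fun x hx => by simpa [hgx] using (g ⟨x, hx⟩).2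
  have hDX : D.carrier ⊆ X.carrier := fun y hy => by
    have h : y = g.symm ⟨y, hy⟩ := by simpa using hgx (g.symm ⟨y, hy⟩)
    rw [h]
    exact (g.symm ⟨y, hy⟩).2
  obtain rfl : X = D :=
    SStr.eq_of_sub_of_carrier_eq ⟨hXD, g.toEmbedding, hgx⟩ (hXD.antisymm hDX)
  exact hDB

theorem UnivOver.mono {B B' X : SStr L U} (hu : AC.UnivOver B X) (hBB' : AC.strong B B') :
    AC.UnivOver B' X := by
  intro C hC hXC hcard
  obtain ⟨f, ⟨D, hDB, g, hg⟩, hfix⟩ := hu C hC hXC hcard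
  obtain ⟨-, ι, hι⟩ := AC.sub_of_strong hBB'
  refine ⟨ι.comp f, ⟨D, AC.strong_trans hDB hBB', g, fun x => ?_⟩, fun x hx => ?_⟩
  · simp [hι, hg]
  · simp [hι, hfix x hx]

theorem StronglyCat.exists_univOver_ssubset {κ : Cardinal.{u}} (hcat : AC.StronglyCat κ)
    {X : SStr L U} (hX : X ∈ AC.K) (hXc : #X.carrier = κ) :
    ∃ B ∈ AC.K, #B.carrier = κ ∧ AC.UnivOver B X ∧ X.carrier ⊂ B.carrier := by
  obtain ⟨B, hBK, hBc, hu⟩ := hcat.2.2 X hX hXc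
  obtain ⟨X', -, hX'c, hne, hXX'⟩ := hcat.2.1 X hX hXc
  have hsub := AC.sub_of_strong hXX'
  obtain ⟨v, hvX', hvX⟩ : ∃ v ∈ X'.carrier, v ∉ X.carrier :=
    (Set.ssubset_iff_of_subset hsub.1).1 <|
      hsub.1.ssubset_of_ne fun h => hne (SStr.eq_of_sub_of_carrier_eq hsub h)
  obtain ⟨f, -, hfix⟩ := hu X' (AC.mem_of_strong_right hXX') hXX' (hX'c.trans hXc.symm)
  refine ⟨B, hBK, hBc, hu, (Set.ssubset_iff_of_subset (AC.sub_of_strong (hu.strong hX)).1).2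
    ⟨f ⟨v, hvX'⟩, (f _).2, fun hfv => hvX ?_⟩⟩
  -- `f` fixes `X` pointwise, so `f (f v) = f v`, and injectivity gives `f v = v`.
  have hfv' : f ⟨f ⟨v, hvX'⟩, hsub.1 hfv⟩ = f ⟨v, hvX'⟩ := Subtype.ext (hfix _ hfv)
  have hfvv : (f ⟨v, hvX'⟩ : U) = v := congrArg Subtype.val (f.injective hfv')
  exact hfvv ▸ hfv

section Chain

variable {Θ : Ordinal.{u}} {c : Ordinal.{u} → SStr L U}

theorem IsCtsChain.strong_of_le (hc : AC.IsCtsChain Θ c) {i j : Ordinal.{u}} (hij : i ≤ j)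
    (hj : j < Θ) : AC.strong (c i) (c j) := by
  rcases hij.eq_or_lt with rfl | hij
  · exact AC.strong_refl (hc.1 i hj)
  · exact hc.2.1 i j hij hj

theorem IsCtsChain.carrier_mono (hc : AC.IsCtsChain Θ c) {i j : Ordinal.{u}} (hij : i ≤ j)
    (hj : j < Θ) : (c i).carrier ⊆ (c j).carrier :=
  (AC.sub_of_strong (hc.strong_of_le hij hj)).1

theorem IsCtsChain.congr {c' : Ordinal.{u} → SStr L U} (hc : AC.IsCtsChain Θ c)
    (h : ∀ i < Θ, c i = c' i) : AC.IsCtsChain Θ c' := by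
  refine ⟨fun i hi => h i hi ▸ hc.1 i hi, fun i j hij hj => ?_, fun i hi hl => ?_⟩
  · exact h i (hij.trans hj) ▸ h j hj ▸ hc.2.1 i j hij hj
  · rw [← h i hi, hc.2.2 i hi hl]
    exact Set.iUnion₂_congr fun j hj => by rw [h j (hj.trans hi)]

theorem IsCtsChain.carrier_eq_biUnion_of_cofinal (hc : AC.IsCtsChain Θ c) {x o : Ordinal.{u}}
    {e : Ordinal.{u} → Ordinal.{u}} (hx : x < Θ) (hxl : IsSuccLimit x) (he : ∀ j < o, e j < x)
    (hcof : ∀ k < x, ∃ j < o, k ≤ e j) :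
    (c x).carrier = ⋃ j ∈ Set.Iio o, (c (e j)).carrier := by
  rw [hc.2.2 x hx hxl]
  refine (Set.iUnion₂_mono' fun k hk => ?_).antisymm
    (Set.iUnion₂_mono' fun j hj => ⟨e j, he j hj, subset_rfl⟩)
  obtain ⟨j, hj, hkj⟩ := hcof k hk
  exact ⟨j, hj, hc.carrier_mono hkj ((he j hj).trans hx)⟩

theorem IsCtsChain.comp {o : Ordinal.{u}} {e : Ordinal.{u} → Ordinal.{u}}
    (hc : AC.IsCtsChain Θ c) (he : StrictMono e) (heΘ : ∀ i < o, e i < Θ)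
    (hlim : ∀ i < o, IsSuccLimit i → IsSuccLimit (e i) ∧ ∀ k < e i, ∃ j < i, k ≤ e j) :
    AC.IsCtsChain o (c ∘ e) := by
  refine ⟨fun i hi => hc.1 _ (heΘ i hi), fun i j hij hj => hc.2.1 _ _ (he hij) (heΘ j hj),
    fun i hi hl => ?_⟩
  exact hc.carrier_eq_biUnion_of_cofinal (heΘ i hi) (hlim i hi hl).1 (fun j hj => he hj)
    (hlim i hi hl).2

theorem IsCtsChain.comp_mul {o γ : Ordinal.{u}} (hc : AC.IsCtsChain Θ c) (hγ : 0 < γ)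
    (ho : ∀ i < o, γ * i < Θ) : AC.IsCtsChain o fun i => c (γ * i) :=
  hc.comp (e := (γ * ·)) (fun _ _ h => (mul_lt_mul_iff_right₀ hγ).2 h) ho fun _ _ hl =>
    ⟨isSuccLimit_mul_right hγ hl, fun _ hk =>
      ((lt_mul_iff_of_isSuccLimit hl).1 hk).imp fun _ hj => ⟨hj.1, hj.2.le⟩⟩

theorem IsCtsChain.strictMonoOn_carrier (hc : AC.IsCtsChain Θ c)
    (hss : ∀ i < Θ, (c i).carrier ⊂ (c (i + 1)).carrier) :
    StrictMonoOn (fun i => (c i).carrier) (Set.Iio Θ) := fun i hi _ hj hij =>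
  (hss i hi).trans_subset (hc.carrier_mono (Order.add_one_le_of_lt hij) hj)

/-- The witnessing chain is `c a, c (b + 1), c (b + 2), …`, i.e. `c` reindexed along
`i ↦ b + i` with the first index replaced by `a`. -/
theorem IsCtsChain.isLimitModelOver_add {κ : Cardinal.{u}} {a b γ : Ordinal.{u}}
    (hc : AC.IsCtsChain Θ c) (hcard : ∀ i < Θ, #(c i).carrier = κ)
    (huniv : ∀ i < Θ, AC.UnivOver (c (i + 1)) (c i)) (hab : a ≤ b) (hγ : IsSuccLimit γ)
    (hbγ : b + γ < Θ) : AC.IsLimitModelOver κ γ (c (b + γ)) (c a) := by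
  set e : Ordinal.{u} → Ordinal.{u} := Function.update (b + ·) 0 a
  have he0 : e 0 = a := Function.update_self ..
  have heb : ∀ {i}, i ≠ 0 → e i = b + i := fun hi => Function.update_of_ne hi ..
  have he_le : ∀ i, e i ≤ b + i := fun i => by
    rcases eq_or_ne i 0 with rfl | hi
    · simpa [he0] using hab
    · exact (heb hi).le
  have he : StrictMono e := fun i j hij => by
    rw [heb hij.ne_bot]
    exact (he_le i).trans_lt (add_lt_add_right hij b)
  have hcof : ∀ {l}, IsSuccLimit l → ∀ k < b + l, ∃ j < l, k ≤ e j := fun hl k hk => by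
    obtain ⟨d, hd, hkd⟩ := (lt_add_iff hl.ne_bot).1 hk
    refine ⟨d + 1, hl.add_one_lt hd, ?_⟩
    rw [heb (lt_add_one d).ne_bot]
    exact hkd.trans (add_le_add_right le_self_add b)
  have heγ : ∀ i < γ, e i < b + γ := fun i hi => (he_le i).trans_lt (add_lt_add_right hi b)
  have heΘ : ∀ i < γ, e i < Θ := fun i hi => (heγ i hi).trans hbγ
  have hbΘ : ∀ i < γ, b + i < Θ := fun i hi => (add_lt_add_right hi b).trans hbγ
  refine ⟨c ∘ e, by simp [he0], ?_, ⟨?_, ?_⟩, fun i hi => ?_, fun i hi => hcard _ (heΘ i hi)⟩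
  · exact hc.comp he heΘ fun i hi hl =>
      ⟨(heb hl.ne_bot).symm ▸ isSuccLimit_add b hl, (heb hl.ne_bot).symm ▸ hcof hl⟩
  · exact hc.carrier_eq_biUnion_of_cofinal hbγ (isSuccLimit_add b hγ) heγ (hcof hγ)
  · exact fun i hi => AC.sub_of_strong (hc.2.1 _ _ (heγ i hi) hbγ)
  · simp only [Function.comp_apply, heb (lt_add_one i).ne_bot]
    rcases eq_or_ne i 0 with rfl | hi0
    · rw [he0, zero_add]
      have hb1 : b + 1 < Θ := hbΘ 1 (one_lt_of_isSuccLimit hγ)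
      exact (huniv a ((hab.trans_lt (lt_add_one b)).trans hb1)).mono
        (hc.strong_of_le (add_le_add_left hab 1) hb1)
    · rw [heb hi0, ← add_assoc]
      exact huniv _ (hbΘ i hi)

end Chain

end AbstractClass

open Order in
theorem Cardinal.card_le_mk_biUnion_of_strictMonoOn {V : Type u} {o : Ordinal.{u}}
    (ho : IsSuccLimit o) {f : Ordinal.{u} → Set V} (hf : StrictMonoOn f (Set.Iio o)) :
    o.card ≤ #(⋃ i ∈ Set.Iio o, f i) := by
  have hnew : ∀ i : Set.Iio o, ∃ x ∈ f (i + 1), x ∉ f i := fun i =>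
    Set.exists_of_ssubset (hf i.2 (ho.add_one_lt i.2) (lt_add_one _))
  choose x hx hxi using hnew
  have hne : ∀ i j : Set.Iio o, (i : Ordinal) < j → x i ≠ x j := fun i j hij h => by
    have hxj : x i ∈ f j :=
      hf.monotoneOn (ho.add_one_lt i.2) j.2 (Order.add_one_le_of_lt hij) (hx i)
    exact hxi j (h ▸ hxj)
  have hinj : Function.Injective fun i : Set.Iio o =>
      (⟨x i, Set.mem_biUnion (ho.add_one_lt i.2) (hx i)⟩ : ⋃ i ∈ Set.Iio o, f i) := by
    intro i j h
    by_contra hij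
    rcases lt_or_gt_of_ne (Subtype.coe_injective.ne hij) with hij | hij
    · exact hne i j hij (congrArg Subtype.val h)
    · exact hne j i hij (congrArg Subtype.val h).symm
  have := lift_mk_le_lift_mk_of_injective hinj
  rwa [mk_Iio_ordinal, lift_lift, lift_le] at this

open Cardinal Order in
theorem IsUnionOf.mk_eq_succ {L : FirstOrder.Language.{u, u}} {U : Type u}
    {κ : Cardinal.{u}} (hκ : ℵ₀ ≤ κ) {A : Ordinal.{u} → SStr L U} {B : SStr L U}
    (hB : IsUnionOf (succ κ).ord A B) (hcard : ∀ i < (succ κ).ord, #(A i).carrier ≤ κ)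
    (hA : StrictMonoOn (fun i => (A i).carrier) (Set.Iio (succ κ).ord)) :
    #B.carrier = succ κ := by
  rw [hB.1]
  refine le_antisymm ?_ ?_
  · exact mk_biUnion_le_of_le (card_ord _).le (hκ.trans (le_succ κ)) _
      fun j hj => (hcard j hj).trans (le_succ κ)
  · simpa using card_le_mk_biUnion_of_strictMonoOn (isSuccLimit_ord (hκ.trans (le_succ κ))) hA

namespace WeakAEC

open Cardinal Order

variable {L : FirstOrder.Language.{u, u}} {U : Type u} (W : WeakAEC L U) (κ : Cardinal.{u})

noncomputable def univExt (X : SStr L U) : SStr L U :=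
  @Classical.epsilon _ ⟨X⟩ fun B =>
    B ∈ W.K ∧ #B.carrier = κ ∧ W.UnivOver B X ∧ X.carrier ⊂ B.carrier

noncomputable def chainUnion (δ : Ordinal.{u}) (c : Ordinal.{u} → SStr L U) : SStr L U :=
  @Classical.epsilon _ ⟨c 0⟩ fun B => IsUnionOf δ c B ∧ B ∈ W.K ∧ ∀ i < δ, W.strong (c i) B

noncomputable def univChain (D : SStr L U) (o : Ordinal.{u}) : SStr L U :=
  Ordinal.limitRecOn o D (fun _ X => W.univExt κ X) fun o _ c =>
    W.chainUnion o fun j => if h : j < o then c j h else D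

variable {W κ}

theorem univExt_spec (hcat : W.StronglyCat κ) {X : SStr L U} (hX : X ∈ W.K)
    (hXc : #X.carrier = κ) :
    W.univExt κ X ∈ W.K ∧ #(W.univExt κ X).carrier = κ ∧ W.UnivOver (W.univExt κ X) X ∧
      X.carrier ⊂ (W.univExt κ X).carrier :=
  Classical.epsilon_spec (hcat.exists_univOver_ssubset hX hXc)

theorem chainUnion_spec {δ : Ordinal.{u}} (hδ : IsSuccLimit δ) {c : Ordinal.{u} → SStr L U}
    (hc : W.IsCtsChain δ c) :
    IsUnionOf δ c (W.chainUnion δ c) ∧ W.chainUnion δ c ∈ W.K ∧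
      ∀ i < δ, W.strong (c i) (W.chainUnion δ c) :=
  Classical.epsilon_spec (W.chain_union δ hδ c hc)

variable (D : SStr L U)

@[simp]
theorem univChain_zero : W.univChain κ D 0 = D :=
  Ordinal.limitRecOn_zero ..

theorem univChain_add_one (i : Ordinal.{u}) :
    W.univChain κ D (i + 1) = W.univExt κ (W.univChain κ D i) :=
  Ordinal.limitRecOn_add_one ..

theorem univChain_limit {i : Ordinal.{u}} (hi : IsSuccLimit i) :
    W.univChain κ D i = W.chainUnion i fun j => if j < i then W.univChain κ D j else D := by
  rw [univChain, Ordinal.limitRecOn_limit _ _ _ _ hi]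
  simp only [dite_eq_ite]
  rfl

theorem univChain_spec (hκ : ℵ₀ ≤ κ) (hcat : W.StronglyCat κ) (hD : D ∈ W.K)
    (hDc : #D.carrier = κ) (i : Ordinal.{u}) (hi : i < (succ κ).ord) :
    (W.univChain κ D i ∈ W.K ∧ #(W.univChain κ D i).carrier = κ) ∧
      (∀ j < i, W.strong (W.univChain κ D j) (W.univChain κ D i)) ∧
      (IsSuccLimit i →
        (W.univChain κ D i).carrier = ⋃ j ∈ Set.Iio i, (W.univChain κ D j).carrier) := by
  induction i using Ordinal.limitRecOn with
  | zero => simpa using ⟨hD, hDc⟩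
  | add_one i IH =>
    obtain ⟨⟨hK, hcard⟩, hstrong, -⟩ := IH ((lt_add_one i).trans hi)
    obtain ⟨hK', hcard', hu, -⟩ := univExt_spec hcat hK hcard
    rw [univChain_add_one]
    refine ⟨⟨hK', hcard'⟩, fun j hj => ?_, fun hl => (not_isSuccLimit_add_one i hl).elim⟩
    · rcases (Order.lt_add_one_iff.1 hj).eq_or_lt with rfl | hj
      · exact hu.strong hK
      · exact W.strong_trans (hstrong j hj) (hu.strong hK)
  | limit i hl IH =>
    set c := W.univChain κ D
    have hc : W.IsCtsChain i c :=
      ⟨fun j hj => (IH j hj (hj.trans hi)).1.1,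
        fun j k hjk hk => (IH k hk (hk.trans hi)).2.1 j hjk,
        fun j hj hjl => (IH j hj (hj.trans hi)).2.2 hjl⟩
    obtain ⟨⟨hcar, -⟩, hK, hstrong⟩ := chainUnion_spec hl (hc.congr fun j hj => (if_pos hj).symm)
    rw [← univChain_limit D hl] at hcar hK hstrong
    have hcar' : (c i).carrier = ⋃ j ∈ Set.Iio i, (c j).carrier :=
      hcar.trans (Set.iUnion₂_congr fun j hj => by simp [Set.mem_Iio.1 hj])
    refine ⟨⟨hK, le_antisymm ?_ ?_⟩, fun j hj => by simpa [hj] using hstrong j hj, fun _ => hcar'⟩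
    · rw [hcar']
      exact mk_biUnion_le_of_le (lt_succ_iff.1 (lt_ord.1 hi)) hκ _
        fun j hj => (IH j hj (hj.trans hi)).1.2.le
    · have hDi : D.carrier ⊆ (c i).carrier := by
        simpa [c] using (W.sub_of_strong (hstrong 0 hl.bot_lt)).1
      exact hDc ▸ mk_le_mk_of_subset hDi

theorem exists_univChain (hκ : ℵ₀ ≤ κ) (hcat : W.StronglyCat κ) {D : SStr L U} (hD : D ∈ W.K)
    (hDc : #D.carrier = κ) :
    ∃ c : Ordinal.{u} → SStr L U, c 0 = D ∧ W.IsCtsChain (succ κ).ord c ∧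
      ∀ i < (succ κ).ord, #(c i).carrier = κ ∧ W.UnivOver (c (i + 1)) (c i) ∧
        (c i).carrier ⊂ (c (i + 1)).carrier := by
  have hspec := univChain_spec D hκ hcat hD hDc
  refine ⟨W.univChain κ D, univChain_zero D, ⟨fun i hi => (hspec i hi).1.1,
    fun i j hij hj => (hspec j hj).2.1 i hij, fun i hi => (hspec i hi).2.2⟩, fun i hi => ?_⟩
  obtain ⟨-, -, hu, hss⟩ := univExt_spec hcat (hspec i hi).1.1 (hspec i hi).1.2
  rw [univChain_add_one]
  exact ⟨(hspec i hi).1.2, hu, hss⟩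

end WeakAEC

/-- Proposition 3.12: in a strongly `κ⁺`-categorical weak AEC, for every
`D ∈ K` of cardinality `κ` and every limit `γ < κ⁺`, the unique model `F` of cardinality `κ⁺`
has a filtration `(A i)_{i < κ⁺}` with `A 0 ≅ D` and with `A β` a `(κ, γ)`-limit model over
`A α` whenever `α < β < κ⁺` and `β` is a successor ordinal. -/
theorem statement3 {L : FirstOrder.Language.{u, u}} {U : Type u}
    (W : WeakAEC L U) (κ : Cardinal.{u}) (hκ : W.LS + ℵ₀ ≤ κ)
    (hcat : W.toAbstractClass.StronglyCat κ)
    (D : SStr L U) (hD : D ∈ W.K) (hDcard : #D.carrier = κ)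
    (γ : Ordinal.{u}) (hγ : Order.IsSuccLimit γ) (hγκ : γ < (Order.succ κ).ord)
    (F : SStr L U) (hF : F ∈ W.K) (hFcard : #F.carrier = Order.succ κ) :
    ∃ A : Ordinal.{u} → SStr L U,
      W.toAbstractClass.IsCtsChain (Order.succ κ).ord A ∧
      Nonempty ((A 0).carrier ≃[L] D.carrier) ∧
      (∀ α β : Ordinal.{u}, α < β → β < (Order.succ κ).ord → (∃ β', β = β' + 1) →
        W.toAbstractClass.IsLimitModelOver κ γ (A β) (A α)) ∧
      ∃ B, IsUnionOf (Order.succ κ).ord A B ∧ Nonempty (B.carrier ≃[L] F.carrier) := by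
  have hκ0 : ℵ₀ ≤ κ := le_add_self.trans hκ
  have hκ1 : ℵ₀ ≤ Order.succ κ := hκ0.trans (Order.le_succ κ)
  obtain ⟨c, hc0, hc, hcard⟩ := W.exists_univChain hκ0 hcat hD hDcard
  have hmul : ∀ i < (Order.succ κ).ord, γ * i < (Order.succ κ).ord :=
    fun i hi => Ordinal.isPrincipal_mul_ord hκ1 hγκ hi
  have hA := hc.comp_mul hγ.bot_lt hmul
  obtain ⟨B, hB, hBK, -⟩ := W.chain_union _ (Cardinal.isSuccLimit_ord hκ1) _ hA
  have hA0 : c (γ * 0) = D := by rw [mul_zero, hc0]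
  refine ⟨_, hA, ⟨hA0 ▸ .refl L D.carrier⟩, ?_, B, hB, ?_⟩
  · rintro α _ hαβ hβ ⟨δ, rfl⟩
    have hδ : γ * δ + γ < (Order.succ κ).ord := by simpa [mul_add_one] using hmul _ hβ
    simpa [mul_add_one] using hc.isLimitModelOver_add (fun i hi => (hcard i hi).1)
      (fun i hi => (hcard i hi).2.1) (mul_le_mul_right (Order.lt_add_one_iff.1 hαβ) γ) hγ hδ
  · have hstrict := (hc.strictMonoOn_carrier fun i hi => (hcard i hi).2.2).comp
      (fun i _ j _ hij => (mul_lt_mul_iff_right₀ hγ.bot_lt).2 hij) hmul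
    have hBcard := hB.mk_eq_succ hκ0 (fun i hi => (hcard _ (hmul i hi)).1.le) hstrict
    obtain ⟨_, -, -, huniq⟩ := hcat.1
    exact ⟨(huniq F hF hFcard).some.symm.comp (huniq B hBK hBcard).some⟩
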